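/- Let q be an odd prime power with q ≡ 2 (mod 3). Then the (2q+2)×(2q+2) block matrix H = [[I_{q+1} − U_qᵀ, U_q + I_{q+1}], [I_{q+1} + U_qᵀ, U_q − I_{q+1}]] is a Hadamard matrix of order 2q+2, the row of H indexed by ∞ in the first block row is the all-one vector, and every row of H, reduced modulo 3, is a codeword of L(q). -/

import Mathlib

/-! Write `χ` for the quadratic character and `U = U_q`. The entries of `U Uᵀ` are the
character sums `∑_b χ(a - b) χ(a' - b)`, which equal `-1` for `a ≠ a'` by the Jacobi-sum
evaluation `J(χ, χ) = -χ(-1)`; so `U Uᵀ = q I`, hence also `Uᵀ U = q I`. For any such `U` with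
zero diagonal and `±1` entries off it, `H` has `±1` entries and `H Hᵀ = (2q + 2) I`.
Since `q ≡ -1 (mod 3)`, reducing modulo 3 gives `Uᵀ U = -I`, so `(I ∓ Uᵀ) U = U ± I` and
`H = [[I - Uᵀ], [I + Uᵀ]] · (I | U)`: every row of `H` is a combination of rows of `(I | U)`. -/

open Matrix Finset

/-- The Pless matrix `S_q`, with rows and columns indexed by `GF(q) ∪ {∞}`
(`none` playing the role of `∞`), built from the quadratic character of `GF(q)`. -/
def Smat (F : Type) [Field F] [Fintype F] [DecidableEq F] :
    Matrix (Option F) (Option F) ℤ := fun i j =>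
  match i, j with
  | none, none => 0
  | none, some _ => 1
  | some _, none => quadraticChar F (-1)
  | some a, some b => quadraticChar F (a - b)

/-- The matrix `U_q`, obtained from `S_q` by replacing each entry `s_{a,∞}`
(`a ∈ GF(q)`) in the column labeled `∞` by `-1`. -/
def Umat (F : Type) [Field F] [Fintype F] [DecidableEq F] :
    Matrix (Option F) (Option F) ℤ := fun i j =>
  match i, j with
  | some _, none => -1
  | i, j => Smat F i j

/-- The row of the generator matrix `(I | U_q)` of the code `L(q)`,
reduced modulo 3, indexed by `i : Option F`. -/
def genRowL (F : Type) [Field F] [Fintype F] [DecidableEq F] (i : Option F) :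
    (Option F ⊕ Option F) → ZMod 3 := fun j =>
  match j with
  | Sum.inl k => if i = k then 1 else 0
  | Sum.inr k => ((Umat F i k : ℤ) : ZMod 3)

/-- The code `L(q)`: the ternary code of length `2q+2` spanned by the rows of
`(I | U_q)` reduced modulo 3; it is monomially equivalent to the Pless symmetry code. -/
def Lcode (F : Type) [Field F] [Fintype F] [DecidableEq F] :
    Submodule (ZMod 3) ((Option F ⊕ Option F) → ZMod 3) :=
  Submodule.span (ZMod 3) (Set.range (genRowL F))

/-- The Hadamard matrix `H = [[I − U_qᵀ, U_q + I], [I + U_qᵀ, U_q − I]]`. -/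
def Hmat (F : Type) [Field F] [Fintype F] [DecidableEq F] :
    Matrix (Option F ⊕ Option F) (Option F ⊕ Option F) ℤ :=
  Matrix.fromBlocks (1 - (Umat F)ᵀ) (Umat F + 1) (1 + (Umat F)ᵀ) (Umat F - 1)

section QuadraticCharSums

variable {F : Type} [Field F] [Fintype F] [DecidableEq F]

local notation "χ" => quadraticChar F

lemma quadraticChar_sum_mul_self : ∑ x : F, χ x * χ x = Fintype.card F - 1 := by
  rw [← Finset.add_sum_erase _ _ (Finset.mem_univ 0), MulChar.map_zero, zero_mul, zero_add,
    Finset.sum_congr rfl fun x hx => by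
      rw [← sq, quadraticChar_sq_one (Finset.ne_of_mem_erase hx)],
    Finset.sum_const, Finset.card_erase_of_mem (Finset.mem_univ 0), Finset.card_univ,
    nsmul_one, Nat.cast_pred Fintype.card_pos]

/-- The substitution `x = -c t` turns the sum into `χ(-1)` times the Jacobi sum `J(χ, χ)`,
which equals `-χ(-1)` because `χ = χ⁻¹`. -/
lemma quadraticChar_sum_mul_add_of_ne_zero (hF : ringChar F ≠ 2) {c : F} (hc : c ≠ 0) :
    ∑ x : F, χ x * χ (x + c) = -1 := by
  have hJ : ∑ t : F, χ t * χ (1 - t) = -χ (-1) := by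
    have := jacobiSum_nontrivial_inv (quadraticChar_ne_one hF)
    rwa [(quadraticChar_isQuadratic F).inv] at this
  calc ∑ x : F, χ x * χ (x + c) = ∑ t : F, χ (-c * t) * χ (-c * t + c) :=
        (Fintype.sum_equiv (Equiv.mulLeft₀ _ (neg_ne_zero.mpr hc)) _ _ fun _ => rfl).symm
    _ = ∑ t : F, χ (-1) * (χ t * χ (1 - t)) := by
        refine Finset.sum_congr rfl fun t _ => ?_
        rw [show -c * t + c = c * (1 - t) by ring, neg_mul, ← neg_one_mul, map_mul, map_mul,
          map_mul]
        linear_combination (χ (-1) * χ t * χ (1 - t)) * quadraticChar_sq_one hc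
    _ = -1 := by
        rw [← Finset.mul_sum, hJ, mul_neg, ← sq, quadraticChar_sq_one (neg_ne_zero.mpr one_ne_zero)]

lemma quadraticChar_sum_sub (hF : ringChar F ≠ 2) (a : F) : ∑ b : F, χ (a - b) = 0 :=
  (Fintype.sum_equiv (Equiv.subLeft a) _ _ fun _ => rfl).trans (quadraticChar_sum_zero hF)

lemma quadraticChar_sum_sub_mul_sub (hF : ringChar F ≠ 2) (a a' : F) :
    ∑ b : F, χ (a - b) * χ (a' - b) = if a = a' then (Fintype.card F : ℤ) - 1 else -1 := by
  rw [Fintype.sum_equiv (Equiv.subLeft a) _ (fun x => χ x * χ (x + (a' - a))) fun b => by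
    rw [Equiv.subLeft_apply, sub_add_sub_cancel']]
  split_ifs with h
  · simp only [h, sub_self, add_zero, quadraticChar_sum_mul_self]
  · exact quadraticChar_sum_mul_add_of_ne_zero hF (sub_ne_zero.mpr (Ne.symm h))

end QuadraticCharSums

namespace Matrix

variable {n R : Type*}

theorem mul_eq_smul_one_comm [Fintype n] [DecidableEq n] [CommRing R] [IsDomain R]
    {A B : Matrix n n R} {c : R} (hc : c ≠ 0) : A * B = c • 1 ↔ B * A = c • 1 := by
  suffices key : ∀ {A B : Matrix n n R}, A * B = c • 1 → B * A = c • 1 from ⟨key, key⟩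
  intro A B h
  have hdet : A.det ≠ 0 := fun h0 => by
    have := congrArg det h
    rw [det_mul, h0, zero_mul, det_smul, det_one, mul_one] at this
    exact pow_ne_zero _ hc this.symm
  apply smul_right_injective (Matrix n n R) hdet
  calc A.det • (B * A) = adjugate A * A * (B * A) := by rw [adjugate_mul, smul_mul, one_mul]
    _ = adjugate A * (A * B) * A := by simp only [Matrix.mul_assoc]
    _ = A.det • (c • 1) := by
        rw [h, Matrix.mul_smul, mul_one, smul_mul, adjugate_mul, smul_comm]

theorem mul_row_mem_span_range [Fintype n] [CommSemiring R] {m k : Type*} (A : Matrix m n R)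
    (B : Matrix n k R) (i : m) : (A * B) i ∈ Submodule.span R (Set.range B) :=
  range_vecMulLinear B ▸ LinearMap.mem_range_self B.vecMulLinear (A i)

def doubling [DecidableEq n] [Ring R] (U : Matrix n n R) : Matrix (n ⊕ n) (n ⊕ n) R :=
  fromBlocks (1 - Uᵀ) (U + 1) (1 + Uᵀ) (U - 1)

theorem doubling_apply_eq_one_or_eq_neg_one [DecidableEq n] [Ring R] {U : Matrix n n R}
    (hdiag : ∀ i, U i i = 0) (hoff : ∀ i j, i ≠ j → U i j = 1 ∨ U i j = -1) (i j : n ⊕ n) :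
    doubling U i j = 1 ∨ doubling U i j = -1 := by
  rcases i with i | i <;> rcases j with j | j <;>
  · rcases eq_or_ne i j with rfl | h
    · simp [doubling, hdiag]
    · rcases hoff i j h with e | e <;> rcases hoff j i h.symm with e' | e' <;>
        simp [doubling, one_apply_ne h, e, e']

theorem doubling_mul_transpose [Fintype n] [DecidableEq n] [CommRing R]
    {U : Matrix n n R} {c : R} (h₁ : U * Uᵀ = c • 1) (h₂ : Uᵀ * U = c • 1) :
    doubling U * (doubling U)ᵀ = (2 * c + 2) • 1 := by
  rw [doubling, fromBlocks_transpose, fromBlocks_multiply, ← fromBlocks_one, fromBlocks_smul,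
    smul_zero]
  simp only [transpose_sub, transpose_add, transpose_one, transpose_transpose, sub_mul, mul_sub,
    add_mul, mul_add, one_mul, mul_one, h₁, h₂]
  congr 1 <;> module

theorem doubling_row_mem_span_fromCols [Fintype n] [DecidableEq n] [CommRing R]
    {U : Matrix n n R} (hU : Uᵀ * U = -1) (i : n ⊕ n) :
    doubling U i ∈ Submodule.span R (Set.range (fromCols 1 U)) := by
  have hfactor : doubling U = fromRows (1 - Uᵀ) (1 + Uᵀ) * fromCols 1 U := by
    simp only [fromRows_mul_fromCols, sub_mul, add_mul, one_mul, mul_one, hU, doubling]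
    simp only [sub_neg_eq_add, ← sub_eq_add_neg]
  exact hfactor ▸ mul_row_mem_span_range _ _ i

theorem map_doubling [DecidableEq n] {S : Type*} [Ring R] [Ring S] (f : R →+* S)
    (U : Matrix n n R) :
    (doubling U).map f = doubling (U.map f) := by
  simp [doubling, fromBlocks_map, transpose_map, Matrix.map_sub, Matrix.map_add]

end Matrix

section PlessMatrix

variable (F : Type) [Field F] [Fintype F] [DecidableEq F]

lemma Umat_apply_self (i : Option F) : Umat F i i = 0 := by
  rcases i with _ | a <;> simp [Umat, Smat]

lemma Umat_apply_of_ne (i j : Option F) (h : i ≠ j) : Umat F i j = 1 ∨ Umat F i j = -1 := by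
  rcases i with _ | a <;> rcases j with _ | b
  · exact absurd rfl h
  · exact .inl rfl
  · exact .inr rfl
  · exact quadraticChar_dichotomy (sub_ne_zero.mpr fun hab => h (congrArg some hab))

lemma Umat_mul_transpose (hF : ringChar F ≠ 2) :
    Umat F * (Umat F)ᵀ = (Fintype.card F : ℤ) • 1 := by
  ext i j
  rw [mul_apply, Fintype.sum_option]
  rcases i with _ | a <;> rcases j with _ | a'
  · simp [Umat, Smat]
  · simp [Umat, Smat, -quadraticChar_apply, quadraticChar_sum_sub hF]
  · simp [Umat, Smat, -quadraticChar_apply, quadraticChar_sum_sub hF]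
  · simp only [Umat, Smat, transpose_apply, quadraticChar_sum_sub_mul_sub hF, Matrix.smul_apply]
    rcases eq_or_ne a a' with rfl | h
    · simp
    · simp [h]

lemma Umat_transpose_mul (hF : ringChar F ≠ 2) :
    (Umat F)ᵀ * Umat F = (Fintype.card F : ℤ) • 1 :=
  (mul_eq_smul_one_comm (Nat.cast_ne_zero.mpr Fintype.card_ne_zero)).mp (Umat_mul_transpose F hF)

lemma Umat_map_transpose_mul_eq_neg_one (hF : ringChar F ≠ 2) (h3 : Fintype.card F % 3 = 2) :
    ((Umat F).map (Int.castRingHom (ZMod 3)))ᵀ * (Umat F).map (Int.castRingHom (ZMod 3)) = -1 := by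
  have hq : (Fintype.card F : ZMod 3) = -1 := by rw [← ZMod.natCast_mod, h3]; decide
  rw [← transpose_map, ← Matrix.map_mul, Umat_transpose_mul F hF]
  ext i j
  rw [map_apply, Matrix.smul_apply, Matrix.neg_apply]
  rcases eq_or_ne i j with rfl | h
  · simp [hq]
  · simp [one_apply_ne h]

lemma Hmat_eq_doubling : Hmat F = (Umat F).doubling := rfl

lemma Hmat_inl_none_apply (j : Option F ⊕ Option F) : Hmat F (Sum.inl none) j = 1 := by
  rcases j with (_ | b) | (_ | b) <;> simp [Hmat, Umat, Smat, one_apply]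

lemma genRowL_eq_fromCols :
    genRowL F = fromCols 1 ((Umat F).map (Int.castRingHom (ZMod 3))) := by
  ext i (j | j) <;> simp [genRowL, one_apply]

end PlessMatrix

/-- For an odd prime power `q ≡ 2 (mod 3)`, the block matrix
`H = [[I − U_qᵀ, U_q + I], [I + U_qᵀ, U_q − I]]` is a Hadamard matrix of order `2q+2`,
its row indexed by `∞` in the first block row is the all-one vector, and each of its
rows, reduced modulo 3, is a codeword of `L(q)`. -/
theorem stmt_4 (q : ℕ) (hq : Odd q) (h3 : q % 3 = 2)
    (F : Type) [Field F] [Fintype F] [DecidableEq F] (hF : Fintype.card F = q) :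
    (∀ i j, Hmat F i j = 1 ∨ Hmat F i j = -1) ∧
    Hmat F * (Hmat F)ᵀ =
      ((2 * q + 2 : ℕ) : ℤ) • (1 : Matrix (Option F ⊕ Option F) (Option F ⊕ Option F) ℤ) ∧
    (∀ j, Hmat F (Sum.inl none) j = 1) ∧
    (∀ i, (fun j => ((Hmat F i j : ℤ) : ZMod 3)) ∈ Lcode F) := by
  have hchar : ringChar F ≠ 2 := fun h =>
    Nat.not_even_iff_odd.mpr hq (hF ▸ Nat.even_iff.mpr (FiniteField.even_card_iff_char_two.mp h))
  refine ⟨doubling_apply_eq_one_or_eq_neg_one (Umat_apply_self F) (Umat_apply_of_ne F), ?_,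
    Hmat_inl_none_apply F, fun i => ?_⟩
  · rw [Hmat_eq_doubling, doubling_mul_transpose (Umat_mul_transpose F hchar)
      (Umat_transpose_mul F hchar), hF]
    push_cast
    ring_nf
  · have hrow := doubling_row_mem_span_fromCols
      (Umat_map_transpose_mul_eq_neg_one F hchar (hF ▸ h3)) i
    rwa [← map_doubling, ← Hmat_eq_doubling, ← genRowL_eq_fromCols] at hrow
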